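/- Let m' ⊆ m be a Lie triple system, a' a Cartan subalgebra of m', a a Cartan subalgebra of m with a' = a ∩ m', and α ∈ Δ(m',a'). Suppose there exist exactly two roots λ, μ ∈ Δ(m,a) with λ|_{a'} = α = μ|_{a'}, and suppose α^♯ = a·λ^♯ + b·μ^♯ for some nonzero real numbers a, b (here α^♯ ∈ a' ⊆ a). Then a > 0 and b > 0, and there exist a linear subspace m_λ' ⊆ m_λ and a linear isometry Φ : m_λ' → m_μ (with respect to ⟨·,·⟩) such that m'_α = {x + √(b/a)·Φ(x) : x ∈ m_λ'}. In particular, dim m'_α ≤ min(dim m_λ, dim m_μ). -/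

import Mathlib

section

variable {L : Type} [LieRing L] [LieAlgebra ℝ L]

/-- A real subspace of a Lie algebra is *flat* if the Lie bracket vanishes on it. -/
def IsFlat (a : Submodule ℝ L) : Prop := ∀ x ∈ a, ∀ y ∈ a, ⁅x, y⁆ = 0

/-- `a` is a *Cartan subalgebra of `m`*: a flat subspace of `m` which is maximal among
flat subspaces of `m`. -/
def IsCartanSubalgebraIn (m a : Submodule ℝ L) : Prop :=
  a ≤ m ∧ IsFlat a ∧ ∀ b : Submodule ℝ L, b ≤ m → IsFlat b → a ≤ b → b = a

/-- `m'` is a *Lie triple system* contained in `m`. -/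
def IsLieTripleSystemIn (m m' : Submodule ℝ L) : Prop :=
  m' ≤ m ∧ ∀ x ∈ m', ∀ y ∈ m', ∀ z ∈ m', ⁅⁅x, y⁆, z⁆ ∈ m'

/-- The root space of `m` relative to the Cartan subalgebra `a`, for the linear form `lam`
on `a`:  `m_lam = {X ∈ m : ∀ Z ∈ a, ⁅Z,⁅Z,X⁆⁆ = -lam(Z)² • X}`. -/
def rootSpaceIn (m a : Submodule ℝ L) (lam : ↥a →ₗ[ℝ] ℝ) : Submodule ℝ L where
  carrier := {X | X ∈ m ∧ ∀ Z : ↥a, ⁅(Z : L), ⁅(Z : L), X⁆⁆ = (-((lam Z) ^ 2)) • X}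
  zero_mem' := ⟨m.zero_mem, fun Z => by simp⟩
  add_mem' := fun hX hY => ⟨m.add_mem hX.1 hY.1, fun Z => by
    rw [lie_add, lie_add, hX.2 Z, hY.2 Z, smul_add]⟩
  smul_mem' := fun c X hX => ⟨m.smul_mem c hX.1, fun Z => by
    rw [lie_smul, lie_smul, hX.2 Z, smul_comm]⟩

/-- The root system `Δ(m,a)`: all nonzero linear forms on `a` with nonzero root space. -/
def rootSystemIn (m a : Submodule ℝ L) : Set (↥a →ₗ[ℝ] ℝ) :=
  {lam | lam ≠ 0 ∧ rootSpaceIn m a lam ≠ ⊥}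

/-- Restriction of a linear form on `a` to a smaller subspace `a' ≤ a`. -/
def restrictForm {a' a : Submodule ℝ L} (h : a' ≤ a) (lam : ↥a →ₗ[ℝ] ℝ) :
    ↥a' →ₗ[ℝ] ℝ :=
  lam.comp (Submodule.inclusion h)

end

/-!
Put `B := -κ`, an `ad`-invariant inner product on `L`. The operators `ad Z ∘ ad W` with `Z, W ∈ a`
commute and are `B`-symmetric, so they can be diagonalized simultaneously; a common eigenvector lies
in a root space `m_ν`, and if it lies in `m'_α` then `ν|a' = ±α`. Hence `m'_α ⊆ m_λ ⊕ m_μ`,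
orthogonally since `λ ≠ ±μ`.

For `X = X₁ + X₂ ∈ m'_α` and `Z ∈ a'` with `α Z = 1`, the vector `⁅X, ⁅Z, X⁆⁆` lies in the Lie
triple system `m'`, whose orthogonal projection to `a` lands in `a'` (maximality of `a'`). That
projection is `|X₁|² λ^♯ + |X₂|² μ^♯`; comparing with `α^♯ = s λ^♯ + t μ^♯` and using that
`λ^♯, μ^♯` are independent gives `|X₁|² : |X₂|² = s : t`. So `s, t > 0`, and `X₁ ↦ X₂` is a
well-defined linear map scaling `B` by `t / s`, whose graph is `m'_α`.
-/

open Module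

lemma LinearMap.eq_or_eq_neg_of_forall_sq_eq {K M : Type*} [Field K] [CharZero K]
    [AddCommGroup M] [Module K M] {f g : M →ₗ[K] K} (h : ∀ x, f x ^ 2 = g x ^ 2) :
    f = g ∨ f = -g := by
  by_contra! hfg
  obtain ⟨x, hx⟩ := DFunLike.ne_iff.1 hfg.1
  obtain ⟨y, hy⟩ := DFunLike.ne_iff.1 hfg.2
  have hx' : f x = -g x := (sq_eq_sq_iff_eq_or_eq_neg.1 (h x)).resolve_left hx
  have hy' : f y = g y := (sq_eq_sq_iff_eq_or_eq_neg.1 (h y)).resolve_right hy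
  have hxy := h (x + y)
  rw [map_add, map_add, hx', hy'] at hxy
  have hgxy : g x * g y = 0 := by
    have h4 : (4 : K) * (g x * g y) = 0 := by linear_combination -hxy
    simpa using h4
  rcases mul_eq_zero.1 hgxy with h0 | h0
  · exact hx (by rw [hx', h0, neg_zero])
  · exact hy (by rw [hy', LinearMap.neg_apply, h0, neg_zero])

section BilinForm

variable {E : Type*} [AddCommGroup E] [Module ℝ E] {B : LinearMap.BilinForm ℝ E}

lemma LinearMap.BilinForm.eq_of_forall_apply_eq (hBpos : ∀ x, x ≠ 0 → 0 < B x x)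
    {W : Submodule ℝ E} {u v : E} (hu : u ∈ W) (hv : v ∈ W) (h : ∀ w ∈ W, B w u = B w v) :
    u = v := by
  by_contra hne
  refine (hBpos _ (sub_ne_zero.2 hne)).ne' ?_
  rw [map_sub, h _ (W.sub_mem hu hv), sub_self]

lemma LinearMap.BilinForm.isCompl_orthogonal_of_pos [FiniteDimensional ℝ E] (hBs : B.IsSymm)
    (hBpos : ∀ x, x ≠ 0 → 0 < B x x) (W : Submodule ℝ E) : IsCompl W (B.orthogonal W) := by
  refine (B.isCompl_orthogonal_iff_disjoint hBs.isRefl).2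
    (Submodule.disjoint_def.2 fun x hx hxo => ?_)
  by_contra hx0
  exact (hBpos x hx0).ne' (hxo x hx)

lemma LinearMap.BilinForm.exists_eigenvector_of_isSymm [FiniteDimensional ℝ E] (hBs : B.IsSymm)
    (hBpos : ∀ x, x ≠ 0 → 0 < B x x) {T : E →ₗ[ℝ] E} (hT : ∀ x y, B (T x) y = B x (T y))
    {U : Submodule ℝ E} (hU : U ≠ ⊥) (hTU : ∀ x ∈ U, T x ∈ U) :
    ∃ c : ℝ, ∃ y ∈ U, y ≠ 0 ∧ T y = c • y := by
  let core : InnerProductSpace.Core ℝ E :=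
    { inner := fun x y => B x y
      conj_inner_symm := fun x y => by simp [hBs.eq x y]
      re_inner_nonneg := fun x => by
        rcases eq_or_ne x 0 with rfl | hx
        · simp
        · exact (hBpos x hx).le
      add_left := fun x y z => by simp
      smul_left := fun x y r => by simp
      definite := fun x hx => by
        by_contra hx0
        exact (hBpos x hx0).ne' hx }
  let _ : NormedAddCommGroup E := core.toNormedAddCommGroup
  let _ : InnerProductSpace ℝ E := InnerProductSpace.ofCore core.toCore
  have : Nontrivial U := Submodule.nontrivial_iff_ne_bot.2 hU
  have hsymm : (T.restrict hTU).IsSymmetric := fun x y => hT x y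
  obtain ⟨v, hv⟩ := hsymm.hasEigenvalue_iSup_of_finiteDimensional.exists_hasEigenvector
  exact ⟨_, v, v.2, fun h => hv.2 (Subtype.ext h), congrArg Subtype.val hv.apply_eq_smul⟩

lemma LinearMap.BilinForm.exists_common_eigenvector [FiniteDimensional ℝ E] (hBs : B.IsSymm)
    (hBpos : ∀ x, x ≠ 0 → 0 < B x x) {S : Set (E →ₗ[ℝ] E)}
    (hS : ∀ T ∈ S, ∀ x y, B (T x) y = B x (T y)) (hcomm : ∀ T ∈ S, ∀ T' ∈ S, Commute T T')
    {U : Submodule ℝ E} (hU : U ≠ ⊥) (hSU : ∀ T ∈ S, ∀ x ∈ U, T x ∈ U) :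
    ∃ y ∈ U, y ≠ 0 ∧ ∀ T ∈ S, ∃ c : ℝ, T y = c • y := by
  induction hn : finrank ℝ U using Nat.strong_induction_on generalizing U with
  | _ n ih =>
  by_cases hall : ∀ T ∈ S, ∀ x ∈ U, ∃ c : ℝ, T x = c • x
  · obtain ⟨y, hy, hy0⟩ := (Submodule.ne_bot_iff U).1 hU
    exact ⟨y, hy, hy0, fun T hT => hall T hT y hy⟩
  push Not at hall
  obtain ⟨T, hT, x, hx, hTx⟩ := hall
  obtain ⟨c, v, hv, hv0, hTv⟩ :=
    B.exists_eigenvector_of_isSymm hBs hBpos (hS T hT) hU (hSU T hT)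
  -- the eigenspace of `T` in `U` is smaller than `U` and again invariant under `S`
  set U' := U ⊓ Module.End.eigenspace T c
  have hU'lt : U' < U := lt_of_le_of_ne inf_le_left fun h =>
    hTx c (Module.End.mem_eigenspace_iff.1 (h ▸ hx : x ∈ U').2)
  have hU' : U' ≠ ⊥ :=
    (Submodule.ne_bot_iff U').2 ⟨v, ⟨hv, Module.End.mem_eigenspace_iff.2 hTv⟩, hv0⟩
  have hSU' : ∀ T' ∈ S, ∀ x ∈ U', T' x ∈ U' := by
    rintro T' hT' x ⟨hxU, hxT⟩
    refine ⟨hSU T' hT' x hxU, Module.End.mem_eigenspace_iff.2 ?_⟩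
    rw [← Module.End.mul_apply, (hcomm T hT T' hT').eq, Module.End.mul_apply,
      Module.End.mem_eigenspace_iff.1 hxT, map_smul]
  obtain ⟨y, hy, hy0, hyS⟩ :=
    ih _ (hn ▸ Submodule.finrank_lt_finrank_of_lt hU'lt) hU' hSU' rfl
  exact ⟨y, hy.1, hy0, hyS⟩

lemma LinearMap.BilinForm.le_of_forall_common_eigenvector_mem [FiniteDimensional ℝ E]
    (hBs : B.IsSymm) (hBpos : ∀ x, x ≠ 0 → 0 < B x x) {S : Set (E →ₗ[ℝ] E)}
    (hS : ∀ T ∈ S, ∀ x y, B (T x) y = B x (T y)) (hcomm : ∀ T ∈ S, ∀ T' ∈ S, Commute T T')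
    {W P : Submodule ℝ E} (hPW : P ≤ W) (hSW : ∀ T ∈ S, ∀ x ∈ W, T x ∈ W)
    (hSP : ∀ T ∈ S, ∀ x ∈ P, T x ∈ P)
    (h : ∀ y ∈ W, y ≠ 0 → (∀ T ∈ S, ∃ c : ℝ, T y = c • y) → y ∈ P) : W ≤ P := by
  have hU : W ⊓ B.orthogonal P = ⊥ := by
    by_contra hU
    obtain ⟨y, ⟨hyW, hyP⟩, hy0, hyS⟩ := B.exists_common_eigenvector hBs hBpos hS hcomm hU
      fun T hT x ⟨hxW, hxP⟩ => ⟨hSW T hT x hxW, fun n hn => by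
        rw [← hS T hT]; exact hxP _ (hSP T hT n hn)⟩
    exact (hBpos y hy0).ne' (hyP y (h y hyW hy0 hyS))
  intro x hx
  obtain ⟨p, hp, q, hq, rfl⟩ := Submodule.mem_sup.1
    ((B.isCompl_orthogonal_of_pos hBs hBpos P).sup_eq_top ▸ Submodule.mem_top : x ∈ P ⊔ _)
  have hq0 : q ∈ W ⊓ B.orthogonal P := ⟨by simpa using W.sub_mem hx (hPW hp), hq⟩
  rw [hU, Submodule.mem_bot] at hq0
  simpa [hq0] using hp

lemma LinearMap.BilinForm.apply_apply_eq_of_apply_self {M : Type*} [AddCommGroup M] [Module ℝ M]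
    (hBs : B.IsSymm) {f g : M →ₗ[ℝ] E} {s t : ℝ}
    (h : ∀ x, s * B (f x) (f x) = t * B (g x) (g x)) (x y : M) :
    s * B (f x) (f y) = t * B (g x) (g y) := by
  have hxy := h (x + y)
  simp only [map_add, LinearMap.add_apply] at hxy
  linear_combination (hxy - h x - h y - s * hBs.eq (f y) (f x) + t * hBs.eq (g y) (g x)) / 2

lemma LinearMap.BilinForm.exists_linearPMap_of_forall_add_mem (hBpos : ∀ x, x ≠ 0 → 0 < B x x)
    {P Q A : Submodule ℝ E} (hA : A ≤ P ⊔ Q) {s t : ℝ} (hs : s ≠ 0)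
    (hrel : ∀ x ∈ P, ∀ y ∈ Q, x + y ∈ A → s * B y y = t * B x x) :
    ∃ g : E →ₗ.[ℝ] E, g.domain ≤ P ∧ (∀ x, g x ∈ Q) ∧
      (∀ x, s * B (g x) (g x) = t * B x x) ∧ (A : Set E) = {z | ∃ x : g.domain, z = x + g x} := by
  set G : Submodule ℝ (E × E) := P.prod Q ⊓ A.comap (LinearMap.fst ℝ E E + LinearMap.snd ℝ E E)
  have hG : ∀ p : E × E, p ∈ G → p.1 = 0 → p.2 = 0 := by
    rintro ⟨x, y⟩ ⟨⟨hx, hy⟩, hxy⟩ (rfl : x = 0)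
    by_contra hy0
    have := hrel 0 hx y hy hxy
    simp only [map_zero, mul_zero, mul_eq_zero, hs, false_or] at this
    exact (hBpos y hy0).ne' this
  have hgraph : ∀ x : G.toLinearPMap.domain, ((x : E), G.toLinearPMap x) ∈ G :=
    G.mem_graph_toLinearPMap hG
  refine ⟨G.toLinearPMap, ?_, fun x => (hgraph x).1.2,
    fun x => hrel _ (hgraph x).1.1 _ (hgraph x).1.2 (hgraph x).2, ?_⟩
  · rintro _ ⟨p, hp, rfl⟩
    exact hp.1.1
  ext z
  refine ⟨fun hz => ?_, ?_⟩
  · obtain ⟨x, hx, y, hy, rfl⟩ := Submodule.mem_sup.1 (hA hz)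
    have hxy : (x, y) ∈ G.toLinearPMap.graph := by
      rw [G.toLinearPMap_graph_eq hG]
      exact ⟨⟨hx, hy⟩, hz⟩
    obtain ⟨x', rfl, rfl⟩ := (LinearPMap.mem_graph_iff _).1 hxy
    exact ⟨x', rfl⟩
  · rintro ⟨x, rfl⟩
    exact (hgraph x).2

lemma LinearMap.BilinForm.exists_isometry_of_forall_add_mem [FiniteDimensional ℝ E]
    (hBs : B.IsSymm) (hBpos : ∀ x, x ≠ 0 → 0 < B x x) {P Q A : Submodule ℝ E}
    (hA : A ≤ P ⊔ Q) {s t : ℝ} (hs : 0 < s) (ht : 0 < t)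
    (hrel : ∀ x ∈ P, ∀ y ∈ Q, x + y ∈ A → s * B y y = t * B x x) :
    ∃ P' : Submodule ℝ E, P' ≤ P ∧ ∃ Φ : P' →ₗ[ℝ] E, (∀ x, Φ x ∈ Q) ∧
      (∀ x y : P', B (Φ x) (Φ y) = B x y) ∧
      (A : Set E) = {z | ∃ x : P', z = x + √(t / s) • Φ x} ∧
      finrank ℝ A ≤ min (finrank ℝ P) (finrank ℝ Q) := by
  obtain ⟨g, hgP, hgQ, hgB, hgA⟩ := B.exists_linearPMap_of_forall_add_mem hBpos hA hs.ne' hrel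
  have hpol := B.apply_apply_eq_of_apply_self hBs (f := g.toFun) (g := g.domain.subtype) hgB
  set Φ : g.domain →ₗ[ℝ] E := √(s / t) • g.toFun
  have hΦ : ∀ x y, B (Φ x) (Φ y) = B x y := fun x y => by
    have hsq : √(s / t) * √(s / t) = s / t := Real.mul_self_sqrt (div_pos hs ht).le
    simp only [Φ, LinearMap.smul_apply, map_smul, smul_eq_mul, ← mul_assoc, hsq]
    field_simp
    exact hpol x y
  have hΦinj : Function.Injective (Φ.codRestrict Q fun x => Q.smul_mem _ (hgQ x)) := by
    refine (injective_iff_map_eq_zero _).2 fun x hx => ?_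
    have hx0 : B x x = 0 := by
      rw [← hΦ, show Φ x = 0 from congrArg Subtype.val hx]
      simp
    by_contra hne
    exact (hBpos x (by simpa using hne)).ne' hx0
  have hgA' : (A : Set E) = {z | ∃ x : g.domain, z = x + √(t / s) • Φ x} := by
    have h1 : √(t / s) * √(s / t) = 1 := by
      rw [← Real.sqrt_mul (div_pos ht hs).le, show t / s * (s / t) = 1 by field_simp, Real.sqrt_one]
    rw [hgA]
    simp only [Φ, LinearMap.smul_apply, smul_smul, h1, one_smul]
    rfl
  have hAle : finrank ℝ A ≤ finrank ℝ g.domain := by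
    have : A = LinearMap.range (g.domain.subtype + g.toFun) := SetLike.coe_injective (by
      rw [hgA]; ext z; simp [eq_comm])
    rw [this]
    exact LinearMap.finrank_range_le _
  exact ⟨g.domain, hgP, Φ, fun x => Q.smul_mem _ (hgQ x), hΦ, hgA',
    le_min (hAle.trans (Submodule.finrank_mono hgP))
      (hAle.trans (LinearMap.finrank_le_finrank_of_injective hΦinj))⟩

lemma LinearMap.BilinForm.pos_of_forall_add_mem (hBpos : ∀ x, x ≠ 0 → 0 < B x x)
    {P Q A : Submodule ℝ E} (hA : A ≤ P ⊔ Q) (hA0 : A ≠ ⊥) {s t : ℝ} (hs : s ≠ 0) (ht : t ≠ 0)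
    (hrel : ∀ x ∈ P, ∀ y ∈ Q, x + y ∈ A →
      B x x = (B x x + B y y) * s ∧ B y y = (B x x + B y y) * t) :
    0 < s ∧ 0 < t := by
  have hnonneg : ∀ v, 0 ≤ B v v := fun v => by
    rcases eq_or_ne v 0 with rfl | hv
    · simp
    · exact (hBpos v hv).le
  obtain ⟨z, hz, hz0⟩ := (Submodule.ne_bot_iff A).1 hA0
  obtain ⟨x, hx, y, hy, rfl⟩ := Submodule.mem_sup.1 (hA hz)
  obtain ⟨hxs, hyt⟩ := hrel x hx y hy hz
  have hsum : 0 < B x x + B y y := by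
    rcases eq_or_ne x 0 with rfl | hx0
    · simpa using hBpos y (by simpa using hz0)
    · exact add_pos_of_pos_of_nonneg (hBpos x hx0) (hnonneg y)
  exact ⟨((mul_nonneg_iff_of_pos_left hsum).1 (hxs ▸ hnonneg x)).lt_of_ne' hs,
    ((mul_nonneg_iff_of_pos_left hsum).1 (hyt ▸ hnonneg y)).lt_of_ne' ht⟩

end BilinForm

section Lie

variable {L : Type} [LieRing L] [LieAlgebra ℝ L] {B : LinearMap.BilinForm ℝ L}

lemma IsFlat.lie_lie_comm {a : Submodule ℝ L} (ha : IsFlat a) {z w : L} (hz : z ∈ a) (hw : w ∈ a)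
    (x : L) : ⁅z, ⁅w, x⁆⁆ = ⁅w, ⁅z, x⁆⁆ := by
  rw [leibniz_lie, ha z hz w hw, zero_lie, zero_add]

lemma isLieTripleSystemIn_top_of_lie_mem {k m : Submodule ℝ L}
    (hkm : ∀ x ∈ k, ∀ y ∈ m, ⁅x, y⁆ ∈ m) (hmm : ∀ x ∈ m, ∀ y ∈ m, ⁅x, y⁆ ∈ k) :
    IsLieTripleSystemIn ⊤ m :=
  ⟨le_top, fun x hx y hy z hz => hkm _ (hmm x hx y hy) z hz⟩

lemma rootSpaceIn_mono {m m' a : Submodule ℝ L} (h : m' ≤ m) (f : a →ₗ[ℝ] ℝ) :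
    rootSpaceIn m' a f ≤ rootSpaceIn m a f :=
  fun _ hx => ⟨h hx.1, hx.2⟩

@[simp]
lemma rootSpaceIn_neg (m a : Submodule ℝ L) (f : a →ₗ[ℝ] ℝ) :
    rootSpaceIn m a (-f) = rootSpaceIn m a f := by
  ext x
  simp [rootSpaceIn]

lemma lie_lie_eq_of_mem_rootSpaceIn {m a : Submodule ℝ L} (ha : IsFlat a) {f : a →ₗ[ℝ] ℝ} {u : L}
    (hu : u ∈ rootSpaceIn m a f) (z w : a) : ⁅(z : L), ⁅(w : L), u⁆⁆ = -(f z * f w) • u := by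
  have hzw := hu.2 (z + w)
  rw [Submodule.coe_add, add_lie, add_lie, lie_add, lie_add, hu.2 z, hu.2 w,
    ha.lie_lie_comm w.2 z.2, map_add] at hzw
  have h2 : (2 : ℝ) • ⁅(z : L), ⁅(w : L), u⁆⁆ = (2 : ℝ) • (-(f z * f w) • u) := by
    linear_combination (norm := module) hzw
  exact smul_right_injective L two_ne_zero h2

lemma lie_lie_mem_rootSpaceIn {m a' a : Submodule ℝ L} (hm : IsLieTripleSystemIn ⊤ m)
    (ham : a ≤ m) (ha : IsFlat a) (haa : a' ≤ a) {f : a' →ₗ[ℝ] ℝ} {z w x : L} (hz : z ∈ a)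
    (hw : w ∈ a) (hx : x ∈ rootSpaceIn m a' f) : ⁅z, ⁅w, x⁆⁆ ∈ rootSpaceIn m a' f := by
  refine ⟨?_, fun Z => ?_⟩
  · rw [← lie_skew]
    exact neg_mem (hm.2 w (ham hw) x hx.1 z (ham hz))
  · have hZ : (Z : L) ∈ a := haa Z.2
    rw [ha.lie_lie_comm hZ hz, ha.lie_lie_comm hZ hw, ha.lie_lie_comm hZ hz,
      ha.lie_lie_comm hZ hw, hx.2 Z, lie_smul, lie_smul]

lemma LinearMap.BilinForm.lieInvariant.apply_lie_lie (hBinv : B.lieInvariant L) (z w x y : L) :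
    B ⁅z, ⁅w, x⁆⁆ y = B x ⁅w, ⁅z, y⁆⁆ := by
  rw [hBinv, hBinv, neg_neg]

lemma apply_eq_zero_of_mem_rootSpaceIn (hBinv : B.lieInvariant L) {m a : Submodule ℝ L}
    {f g : a →ₗ[ℝ] ℝ} {Z : a} (hZ : f Z ^ 2 ≠ g Z ^ 2) {x y : L} (hx : x ∈ rootSpaceIn m a f)
    (hy : y ∈ rootSpaceIn m a g) : B x y = 0 := by
  have h := hBinv.apply_lie_lie Z Z x y
  rw [hx.2 Z, hy.2 Z, map_smul, LinearMap.smul_apply, map_smul, smul_eq_mul, smul_eq_mul] at h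
  exact (mul_eq_zero.1 (by linear_combination h : (g Z ^ 2 - f Z ^ 2) * B x y = 0)).resolve_left
    (sub_ne_zero.2 hZ.symm)

lemma IsCartanSubalgebraIn.mem_of_forall_lie_eq_zero {m' a' : Submodule ℝ L}
    (ha' : IsCartanSubalgebraIn m' a') {y : L} (hy : y ∈ m') (h : ∀ z ∈ a', ⁅z, y⁆ = 0) :
    y ∈ a' := by
  have hflat : IsFlat (a' ⊔ ℝ ∙ y) := by
    intro u hu v hv
    obtain ⟨u₁, hu₁, u₂, hu₂, rfl⟩ := Submodule.mem_sup.1 hu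
    obtain ⟨v₁, hv₁, v₂, hv₂, rfl⟩ := Submodule.mem_sup.1 hv
    obtain ⟨c, rfl⟩ := Submodule.mem_span_singleton.1 hu₂
    obtain ⟨d, rfl⟩ := Submodule.mem_span_singleton.1 hv₂
    have hyv : ⁅y, v₁⁆ = 0 := by rw [← lie_skew, h v₁ hv₁, neg_zero]
    simp [ha'.2.1 u₁ hu₁ v₁ hv₁, h u₁ hu₁, hyv]
  have hle : a' ⊔ ℝ ∙ y ≤ m' := sup_le ha'.1 ((Submodule.span_singleton_le_iff_mem y m').2 hy)
  rw [← ha'.2.2 _ hle hflat le_sup_left]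
  exact Submodule.mem_sup_right (Submodule.mem_span_singleton_self y)

lemma IsCartanSubalgebraIn.mem_of_sub_mem_orthogonal [FiniteDimensional ℝ L] (hBs : B.IsSymm)
    (hBpos : ∀ x, x ≠ 0 → 0 < B x x) (hBinv : B.lieInvariant L) {m m' a' a : Submodule ℝ L}
    (hm' : IsLieTripleSystemIn m m') (ha' : IsCartanSubalgebraIn m' a') (ha : IsFlat a)
    (haa : a' ≤ a) {N v : L} (hN : N ∈ m') (hv : v ∈ a) (hNv : N - v ∈ B.orthogonal a) :
    v ∈ a' := by
  set V := Submodule.span ℝ {x | ∃ z ∈ a', ∃ u ∈ m', x = ⁅z, ⁅z, u⁆⁆}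
  have hVm' : V ≤ m' := Submodule.span_le.2 <| by
    rintro _ ⟨z, hz, u, hu, rfl⟩
    rw [← lie_skew]
    exact neg_mem (hm'.2 z (ha'.1 hz) u hu z (ha'.1 hz))
  -- `a` is flat, so `B w ⁅z, x⁆ = -B ⁅z, w⁆ x` vanishes for `z, w ∈ a`
  have hVa : V ≤ B.orthogonal a := Submodule.span_le.2 <| by
    rintro _ ⟨z, hz, u, hu, rfl⟩ w hw
    have h := hBinv z w ⁅z, u⁆
    rw [ha z (haa hz) w hw, map_zero, LinearMap.zero_apply, eq_comm, neg_eq_zero] at h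
    exact h
  have hm'V : m' ≤ a' ⊔ V := by
    intro x hx
    obtain ⟨r, hr, q, hq, rfl⟩ := Submodule.mem_sup.1
      ((B.isCompl_orthogonal_of_pos hBs hBpos (a' ⊔ V)).sup_eq_top ▸ Submodule.mem_top :
        x ∈ _ ⊔ _)
    have hqm' : q ∈ m' := by simpa using m'.sub_mem hx (sup_le ha'.1 hVm' hr)
    have hqa' : q ∈ a' := ha'.mem_of_forall_lie_eq_zero hqm' fun z hz => by
      by_contra hne
      have h := hBinv z q ⁅z, q⁆
      rw [hBs.eq q, hq _ (Submodule.mem_sup_right (Submodule.subset_span ⟨z, hz, q, hqm', rfl⟩)),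
        neg_zero] at h
      exact (hBpos _ hne).ne' h
    exact add_mem hr (Submodule.mem_sup_left hqa')
  obtain ⟨x₀, hx₀, y, hy, rfl⟩ := Submodule.mem_sup.1 (hm'V hN)
  have hvx₀ : v - x₀ ∈ B.orthogonal a := by
    rw [show v - x₀ = y - (x₀ + y - v) by abel]
    exact (B.orthogonal a).sub_mem (hVa hy) hNv
  have hvx₀' : v - x₀ = 0 := by
    by_contra hne
    exact (hBpos _ hne).ne' (hvx₀ _ (a.sub_mem hv (haa hx₀)))
  rwa [sub_eq_zero.1 hvx₀']

lemma apply_lie_lie_add_of_mem_rootSpaceIn (hBs : B.IsSymm) (hBinv : B.lieInvariant L)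
    {m a : Submodule ℝ L} (ha : IsFlat a) {lam mu : a →ₗ[ℝ] ℝ} {X₁ X₂ : L}
    (hX₁ : X₁ ∈ rootSpaceIn m a lam) (hX₂ : X₂ ∈ rootSpaceIn m a mu) (horth : B X₁ X₂ = 0)
    (Z w : a) :
    B w ⁅X₁ + X₂, ⁅(Z : L), X₁ + X₂⁆⁆ = lam Z * lam w * B X₁ X₁ + mu Z * mu w * B X₂ X₂ := by
  have h : B w ⁅X₁ + X₂, ⁅(Z : L), X₁ + X₂⁆⁆ = -B (X₁ + X₂) ⁅(w : L), ⁅(Z : L), X₁ + X₂⁆⁆ := by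
    rw [← hBinv, ← neg_neg (B w _), ← hBinv, ← lie_skew, map_neg, LinearMap.neg_apply, neg_neg]
  rw [h, lie_add, lie_add, lie_lie_eq_of_mem_rootSpaceIn ha hX₁,
    lie_lie_eq_of_mem_rootSpaceIn ha hX₂]
  simp only [map_add, map_smul, LinearMap.add_apply, smul_eq_mul, horth, hBs.eq X₂ X₁]
  ring

lemma apply_lie_self_of_lie_lie_eq_smul (hBs : B.IsSymm) (hBinv : B.lieInvariant L)
    {z w y : L} {c : ℝ} (h : ⁅w, ⁅z, y⁆⁆ = c • y) : B ⁅z, y⁆ ⁅w, y⁆ = -c * B y y := by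
  rw [hBs.eq, hBinv, h, map_smul, smul_eq_mul, neg_mul]

lemma apply_lie_sq_eq_mul (hBs : B.IsSymm) (hBinv : B.lieInvariant L) {a : Submodule ℝ L}
    (ha : IsFlat a) {z w y : L} (hz : z ∈ a) (hw : w ∈ a) {c c' : ℝ} (hc : ⁅w, ⁅z, y⁆⁆ = c • y)
    (hc' : ⁅w, ⁅w, y⁆⁆ = c' • y) :
    B ⁅z, y⁆ ⁅w, y⁆ ^ 2 = B ⁅z, y⁆ ⁅z, y⁆ * B ⁅w, y⁆ ⁅w, y⁆ := by
  -- compute `B ⁅w, ⁅z, y⁆⁆ ⁅w, ⁅z, y⁆⁆` in two ways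
  have h₁ : B ⁅w, ⁅z, y⁆⁆ ⁅w, ⁅z, y⁆⁆ = c ^ 2 * B y y := by
    simp only [hc, map_smul, LinearMap.smul_apply, smul_eq_mul]
    ring
  have h₂ : B ⁅w, ⁅z, y⁆⁆ ⁅w, ⁅z, y⁆⁆ = -c' * B ⁅z, y⁆ ⁅z, y⁆ := by
    rw [hBinv, ha.lie_lie_comm hw hz, ha.lie_lie_comm hw hz, hc', lie_smul, map_smul, smul_eq_mul,
      neg_mul]
  rw [apply_lie_self_of_lie_lie_eq_smul hBs hBinv hc,
    apply_lie_self_of_lie_lie_eq_smul hBs hBinv hc']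
  linear_combination B y y * (h₂.symm.trans h₁).symm

lemma exists_mem_rootSpaceIn_of_forall_lie_lie_eq_smul (hBs : B.IsSymm)
    (hBpos : ∀ x, x ≠ 0 → 0 < B x x) (hBinv : B.lieInvariant L) {m a : Submodule ℝ L}
    (ha : IsFlat a) {y : L} (hy : y ∈ m) (heig : ∀ z ∈ a, ∀ w ∈ a, ∃ c : ℝ, ⁅z, ⁅w, y⁆⁆ = c • y) :
    ∃ ν : a →ₗ[ℝ] ℝ, y ∈ rootSpaceIn m a ν := by
  by_cases h₀ : ∀ z : a, ⁅(z : L), y⁆ = 0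
  · exact ⟨0, hy, fun Z => by simp [h₀ Z]⟩
  push Not at h₀
  obtain ⟨z₀, hz₀⟩ := h₀
  have hy₀ : y ≠ 0 := by
    rintro rfl
    simp at hz₀
  have hBz₀ := hBpos _ hz₀
  have hBy := hBpos _ hy₀
  obtain ⟨c₀, hc₀⟩ := heig z₀ z₀.2 z₀ z₀.2
  set d := √(B ⁅(z₀ : L), y⁆ ⁅(z₀ : L), y⁆ * B y y)
  have hd : d ^ 2 = B ⁅(z₀ : L), y⁆ ⁅(z₀ : L), y⁆ * B y y := Real.sq_sqrt (mul_pos hBz₀ hBy).le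
  let ν : a →ₗ[ℝ] ℝ :=
    { toFun := fun z => B ⁅(z : L), y⁆ ⁅(z₀ : L), y⁆ / d
      map_add' := fun z w => by simp [add_lie, add_div]
      map_smul' := fun r z => by simp [smul_lie, mul_div_assoc] }
  -- equality in Cauchy–Schwarz (`apply_lie_sq_eq_mul`) makes `-ν Z ^ 2` the eigenvalue of `(ad Z)²`
  refine ⟨ν, hy, fun Z => ?_⟩
  obtain ⟨c, hc⟩ := heig Z Z.2 Z Z.2
  obtain ⟨c', hc'⟩ := heig z₀ z₀.2 Z Z.2
  have hg := apply_lie_sq_eq_mul hBs hBinv ha Z.2 z₀.2 hc' hc₀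
  have hZ := apply_lie_self_of_lie_lie_eq_smul hBs hBinv hc
  rw [hc, show ν Z = B ⁅(Z : L), y⁆ ⁅(z₀ : L), y⁆ / d from rfl, div_pow, hg, hd, hZ]
  congr 1
  field_simp

lemma mem_sup_rootSpaceIn_of_mem_rootSpaceIn {m a' a : Submodule ℝ L} (haa : a' ≤ a)
    {α : a' →ₗ[ℝ] ℝ} (hα : α ≠ 0) {lam mu : a →ₗ[ℝ] ℝ}
    (honly : ∀ ν ∈ rootSystemIn m a, restrictForm haa ν = α → ν = lam ∨ ν = mu) {y : L}
    (hy₀ : y ≠ 0) (hyα : y ∈ rootSpaceIn m a' α) {ν : a →ₗ[ℝ] ℝ} (hyν : y ∈ rootSpaceIn m a ν) :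
    y ∈ rootSpaceIn m a lam ⊔ rootSpaceIn m a mu := by
  have hsq : ∀ Z : a', restrictForm haa ν Z ^ 2 = α Z ^ 2 := fun Z =>
    neg_inj.1 (smul_left_injective ℝ hy₀ ((hyν.2 (Submodule.inclusion haa Z)).symm.trans (hyα.2 Z)))
  obtain ⟨ν', hyν', hν'⟩ : ∃ ν' : a →ₗ[ℝ] ℝ, y ∈ rootSpaceIn m a ν' ∧ restrictForm haa ν' = α := by
    rcases LinearMap.eq_or_eq_neg_of_forall_sq_eq hsq with h | h
    · exact ⟨ν, hyν, h⟩
    · refine ⟨-ν, by rwa [rootSpaceIn_neg], ?_⟩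
      rw [restrictForm, LinearMap.neg_comp, ← restrictForm, h, neg_neg]
  have hroot : ν' ∈ rootSystemIn m a := by
    refine ⟨fun h => hα ?_, (Submodule.ne_bot_iff _).2 ⟨y, hyν', hy₀⟩⟩
    rw [← hν', h]
    rfl
  rcases honly ν' hroot hν' with rfl | rfl
  · exact Submodule.mem_sup_left hyν'
  · exact Submodule.mem_sup_right hyν'

lemma rootSpaceIn_le_sup [FiniteDimensional ℝ L] (hBs : B.IsSymm)
    (hBpos : ∀ x, x ≠ 0 → 0 < B x x) (hBinv : B.lieInvariant L) {m a' a : Submodule ℝ L}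
    (hm : IsLieTripleSystemIn ⊤ m) (ham : a ≤ m) (ha : IsFlat a) (haa : a' ≤ a)
    {α : a' →ₗ[ℝ] ℝ} (hα : α ≠ 0) {lam mu : a →ₗ[ℝ] ℝ}
    (honly : ∀ ν ∈ rootSystemIn m a, restrictForm haa ν = α → ν = lam ∨ ν = mu) :
    rootSpaceIn m a' α ≤ rootSpaceIn m a lam ⊔ rootSpaceIn m a mu := by
  set S : Set (L →ₗ[ℝ] L) :=
    {T | ∃ z ∈ a, ∃ w ∈ a, T = LieAlgebra.ad ℝ L z ∘ₗ LieAlgebra.ad ℝ L w}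
  have hS : ∀ {a'' : Submodule ℝ L} (h : a'' ≤ a) (f : a'' →ₗ[ℝ] ℝ),
      ∀ T ∈ S, ∀ x ∈ rootSpaceIn m a'' f, T x ∈ rootSpaceIn m a'' f := by
    rintro a'' h f _ ⟨z, hz, w, hw, rfl⟩ x hx
    exact lie_lie_mem_rootSpaceIn hm ham ha h hz hw hx
  refine le_trans (B.le_of_forall_common_eigenvector_mem hBs hBpos (S := S) ?_ ?_
    (P := (rootSpaceIn m a lam ⊔ rootSpaceIn m a mu) ⊓ rootSpaceIn m a' α) inf_le_right
    (hS haa α) ?_ ?_) inf_le_left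
  · rintro _ ⟨z, hz, w, hw, rfl⟩ x y
    simp only [LinearMap.comp_apply, LieAlgebra.ad_apply]
    rw [hBinv.apply_lie_lie, ha.lie_lie_comm hw hz]
  · rintro _ ⟨z, hz, w, hw, rfl⟩ _ ⟨z', hz', w', hw', rfl⟩
    ext x
    simp only [Module.End.mul_apply, LinearMap.comp_apply, LieAlgebra.ad_apply]
    rw [ha.lie_lie_comm hw hz', ha.lie_lie_comm hz hz', ha.lie_lie_comm hw hw',
      ha.lie_lie_comm hz hw']
  · rintro T hT x ⟨hx, hxα⟩
    refine ⟨?_, hS haa α T hT x hxα⟩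
    obtain ⟨x₁, hx₁, x₂, hx₂, rfl⟩ := Submodule.mem_sup.1 hx
    rw [map_add]
    exact add_mem (Submodule.mem_sup_left (hS le_rfl lam T hT x₁ hx₁))
      (Submodule.mem_sup_right (hS le_rfl mu T hT x₂ hx₂))
  · intro y hy hy₀ hyS
    obtain ⟨ν, hν⟩ := exists_mem_rootSpaceIn_of_forall_lie_lie_eq_smul hBs hBpos hBinv ha hy.1
      fun z hz w hw => hyS _ ⟨z, hz, w, hw, rfl⟩
    exact ⟨mem_sup_rootSpaceIn_of_mem_rootSpaceIn haa hα honly hy₀ hy hν, hy⟩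

lemma exists_sq_ne_sq_of_restrictForm_eq {a' a : Submodule ℝ L} (haa : a' ≤ a)
    {α : a' →ₗ[ℝ] ℝ} (hα : α ≠ 0) {lam mu : a →ₗ[ℝ] ℝ} (hlammu : lam ≠ mu)
    (hrl : restrictForm haa lam = α) (hrm : restrictForm haa mu = α) :
    ∃ Z : a, lam Z ^ 2 ≠ mu Z ^ 2 := by
  by_contra! h
  rcases LinearMap.eq_or_eq_neg_of_forall_sq_eq h with h | rfl
  · exact hlammu h
  · refine hα (LinearMap.ext fun Z => ?_)
    have h₁ : -mu ⟨Z, haa Z.2⟩ = α Z := LinearMap.congr_fun hrl Z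
    have h₂ : mu ⟨Z, haa Z.2⟩ = α Z := LinearMap.congr_fun hrm Z
    rw [LinearMap.zero_apply]
    linarith

lemma linearIndependent_of_restrictForm_eq {a' a : Submodule ℝ L} (haa : a' ≤ a)
    {α : a' →ₗ[ℝ] ℝ} (hα : α ≠ 0) {lam mu : a →ₗ[ℝ] ℝ} (hlammu : lam ≠ mu)
    (hrl : restrictForm haa lam = α) (hrm : restrictForm haa mu = α) {lamSharp muSharp : L}
    (hlamChar : ∀ Z : a, B Z lamSharp = lam Z) (hmuChar : ∀ Z : a, B Z muSharp = mu Z) :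
    LinearIndependent ℝ ![lamSharp, muSharp] := by
  refine LinearIndependent.pair_iff.2 fun x y hxy => ?_
  have hform : ∀ Z : a, x * lam Z + y * mu Z = 0 := fun Z => by
    simpa [← hlamChar, ← hmuChar] using congrArg (B Z) hxy
  obtain ⟨Z, hZ⟩ := DFunLike.ne_iff.1 hα
  obtain ⟨W, hW⟩ := DFunLike.ne_iff.1 hlammu
  have hyx : y = -x := by
    have h₁ : lam ⟨Z, haa Z.2⟩ = α Z := LinearMap.congr_fun hrl Z
    have h₂ : mu ⟨Z, haa Z.2⟩ = α Z := LinearMap.congr_fun hrm Z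
    have h := hform ⟨Z, haa Z.2⟩
    rw [h₁, h₂, ← add_mul] at h
    linarith [(mul_eq_zero.1 h).resolve_right hZ]
  have hx : x * (lam W - mu W) = 0 := by linear_combination hform W - mu W * hyx
  have hx0 := (mul_eq_zero.1 hx).resolve_right (sub_ne_zero.2 hW)
  exact ⟨hx0, by rw [hyx, hx0, neg_zero]⟩

lemma eq_mul_of_smul_add_smul_mem (hBpos : ∀ x, x ≠ 0 → 0 < B x x) {a' a : Submodule ℝ L}
    (haa : a' ≤ a) {α : a' →ₗ[ℝ] ℝ} {lam mu : a →ₗ[ℝ] ℝ}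
    (hrl : restrictForm haa lam = α) (hrm : restrictForm haa mu = α) {alphaSharp : L}
    (halphaSharp : alphaSharp ∈ a') (halphaChar : ∀ Z : a', B Z alphaSharp = α Z)
    {lamSharp muSharp : L} (hlamChar : ∀ Z : a, B Z lamSharp = lam Z)
    (hmuChar : ∀ Z : a, B Z muSharp = mu Z) (hind : LinearIndependent ℝ ![lamSharp, muSharp])
    {s t : ℝ} (hcomb : alphaSharp = s • lamSharp + t • muSharp) {p q : ℝ}
    (hpq : p • lamSharp + q • muSharp ∈ a') : p = (p + q) * s ∧ q = (p + q) * t := by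
  have h := B.eq_of_forall_apply_eq hBpos hpq (a'.smul_mem (p + q) halphaSharp) fun w hw => by
    have h₁ : lam ⟨w, haa hw⟩ = α ⟨w, hw⟩ := LinearMap.congr_fun hrl ⟨w, hw⟩
    have h₂ : mu ⟨w, haa hw⟩ = α ⟨w, hw⟩ := LinearMap.congr_fun hrm ⟨w, hw⟩
    simp only [map_add, map_smul, smul_eq_mul]
    rw [hlamChar ⟨w, haa hw⟩, hmuChar ⟨w, haa hw⟩, halphaChar ⟨w, hw⟩, h₁, h₂, add_mul]
  rw [hcomb] at h
  obtain ⟨h₁, h₂⟩ := LinearIndependent.pair_iff.1 hind (p - (p + q) * s) (q - (p + q) * t) (by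
    linear_combination (norm := module) h)
  exact ⟨by linarith, by linarith⟩

lemma apply_self_eq_mul_of_add_mem [FiniteDimensional ℝ L] (hBs : B.IsSymm)
    (hBpos : ∀ x, x ≠ 0 → 0 < B x x) (hBinv : B.lieInvariant L) {m m' a' a : Submodule ℝ L}
    (hm' : IsLieTripleSystemIn m m') (ha' : IsCartanSubalgebraIn m' a') (ha : IsFlat a)
    (haa : a' ≤ a) {α : a' →ₗ[ℝ] ℝ} (hα : α ≠ 0) {lam mu : a →ₗ[ℝ] ℝ} (hlammu : lam ≠ mu)
    (hrl : restrictForm haa lam = α) (hrm : restrictForm haa mu = α) {alphaSharp : L}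
    (halphaSharp : alphaSharp ∈ a') (halphaChar : ∀ Z : a', B Z alphaSharp = α Z)
    {lamSharp : L} (hlamSharp : lamSharp ∈ a) (hlamChar : ∀ Z : a, B Z lamSharp = lam Z)
    {muSharp : L} (hmuSharp : muSharp ∈ a) (hmuChar : ∀ Z : a, B Z muSharp = mu Z) {s t : ℝ}
    (hcomb : alphaSharp = s • lamSharp + t • muSharp) {X₁ X₂ : L}
    (hX₁ : X₁ ∈ rootSpaceIn m a lam) (hX₂ : X₂ ∈ rootSpaceIn m a mu) (hX : X₁ + X₂ ∈ m') :
    B X₁ X₁ = (B X₁ X₁ + B X₂ X₂) * s ∧ B X₂ X₂ = (B X₁ X₁ + B X₂ X₂) * t := by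
  obtain ⟨Z, hZ⟩ : ∃ Z : a', α Z = 1 := by
    obtain ⟨Z, hZ⟩ := DFunLike.ne_iff.1 hα
    exact ⟨(α Z)⁻¹ • Z, by rw [map_smul, smul_eq_mul, inv_mul_cancel₀ hZ]⟩
  have hlamZ : lam ⟨Z, haa Z.2⟩ = 1 := (LinearMap.congr_fun hrl Z).trans hZ
  have hmuZ : mu ⟨Z, haa Z.2⟩ = 1 := (LinearMap.congr_fun hrm Z).trans hZ
  obtain ⟨W, hW⟩ := exists_sq_ne_sq_of_restrictForm_eq haa hα hlammu hrl hrm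
  have horth := apply_eq_zero_of_mem_rootSpaceIn hBinv hW hX₁ hX₂
  -- the `a`-component of `⁅X₁ + X₂, ⁅Z, X₁ + X₂⁆⁆ ∈ m'` is `B X₁ X₁ • lamSharp + B X₂ X₂ • muSharp`
  have hN : ⁅X₁ + X₂, ⁅(Z : L), X₁ + X₂⁆⁆ ∈ m' := by
    rw [← lie_skew]
    exact neg_mem (hm'.2 _ (ha'.1 Z.2) _ hX _ hX)
  refine eq_mul_of_smul_add_smul_mem hBpos haa hrl hrm halphaSharp halphaChar hlamChar hmuChar
    (linearIndependent_of_restrictForm_eq haa hα hlammu hrl hrm hlamChar hmuChar) hcomb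
    (ha'.mem_of_sub_mem_orthogonal hBs hBpos hBinv hm' ha haa hN
      (a.add_mem (a.smul_mem _ hlamSharp) (a.smul_mem _ hmuSharp)) fun w hw => ?_)
  have h := apply_lie_lie_add_of_mem_rootSpaceIn hBs hBinv ha hX₁ hX₂ horth ⟨Z, haa Z.2⟩ ⟨w, hw⟩
  rw [hlamZ, hmuZ] at h
  simp only [map_sub, map_add, map_smul, smul_eq_mul, h, hlamChar ⟨w, hw⟩, hmuChar ⟨w, hw⟩]
  ring

end Lie

theorem stmt2_general {L : Type} [LieRing L] [LieAlgebra ℝ L] [Module.Finite ℝ L]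
    (hkill : ∀ X : L, X ≠ 0 → killingForm ℝ L X X < 0)
    (k m : Submodule ℝ L)
    (hkm : ∀ x ∈ k, ∀ y ∈ m, ⁅x, y⁆ ∈ m)
    (hmm : ∀ x ∈ m, ∀ y ∈ m, ⁅x, y⁆ ∈ k)
    (m' : Submodule ℝ L) (hm' : IsLieTripleSystemIn m m')
    (a' a : Submodule ℝ L)
    (ha' : IsCartanSubalgebraIn m' a') (ha : IsCartanSubalgebraIn m a)
    (haa' : a' = a ⊓ m')
    (α : ↥a' →ₗ[ℝ] ℝ) (hα : α ∈ rootSystemIn m' a')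
    (lam mu : ↥a →ₗ[ℝ] ℝ)
    (hlammu : lam ≠ mu)
    (hrl : restrictForm (haa'.trans_le inf_le_left) lam = α)
    (hrm : restrictForm (haa'.trans_le inf_le_left) mu = α)
    (honly : ∀ nu ∈ rootSystemIn m a,
      restrictForm (haa'.trans_le inf_le_left) nu = α → nu = lam ∨ nu = mu)
    (alphaSharp : L) (halphaSharp : alphaSharp ∈ a')
    (halphaChar : ∀ Z : ↥a', -(killingForm ℝ L (Z : L) alphaSharp) = α Z)
    (lamSharp : L) (hlamSharp : lamSharp ∈ a)
    (hlamChar : ∀ Z : ↥a, -(killingForm ℝ L (Z : L) lamSharp) = lam Z)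
    (muSharp : L) (hmuSharp : muSharp ∈ a)
    (hmuChar : ∀ Z : ↥a, -(killingForm ℝ L (Z : L) muSharp) = mu Z)
    (s t : ℝ) (hs : s ≠ 0) (ht : t ≠ 0)
    (hcomb : alphaSharp = s • lamSharp + t • muSharp) :
    0 < s ∧ 0 < t ∧
    ∃ mlam' : Submodule ℝ L, mlam' ≤ rootSpaceIn m a lam ∧
      ∃ Φ : ↥mlam' →ₗ[ℝ] L,
        (∀ x : ↥mlam', Φ x ∈ rootSpaceIn m a mu) ∧
        (∀ x y : ↥mlam',
          -(killingForm ℝ L (Φ x) (Φ y)) = -(killingForm ℝ L (x : L) (y : L))) ∧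
        (rootSpaceIn m' a' α : Set L) =
          {z | ∃ x : ↥mlam', z = (x : L) + Real.sqrt (t / s) • Φ x} ∧
        Module.finrank ℝ ↥(rootSpaceIn m' a' α) ≤
          min (Module.finrank ℝ ↥(rootSpaceIn m a lam))
              (Module.finrank ℝ ↥(rootSpaceIn m a mu)) := by
  set B : LinearMap.BilinForm ℝ L := -killingForm ℝ L
  have hBs : B.IsSymm := ⟨fun x y => by
    simp only [B, LinearMap.neg_apply, LieModule.traceForm_comm]⟩
  have hBpos : ∀ x, x ≠ 0 → 0 < B x x := fun x hx => neg_pos.2 (hkill x hx)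
  have hBinv : B.lieInvariant L := fun x y z => by
    simp only [B, LinearMap.neg_apply, LieModule.traceForm_apply_lie_apply']
  have haa : a' ≤ a := haa'.trans_le inf_le_left
  have hdec : rootSpaceIn m' a' α ≤ rootSpaceIn m a lam ⊔ rootSpaceIn m a mu :=
    (rootSpaceIn_mono hm'.1 α).trans (rootSpaceIn_le_sup hBs hBpos hBinv
      (isLieTripleSystemIn_top_of_lie_mem hkm hmm) ha.1 ha.2.1 haa hα.1 honly)
  have hrel : ∀ x ∈ rootSpaceIn m a lam, ∀ y ∈ rootSpaceIn m a mu, x + y ∈ rootSpaceIn m' a' α →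
      B x x = (B x x + B y y) * s ∧ B y y = (B x x + B y y) * t := fun x hx y hy hxy =>
    apply_self_eq_mul_of_add_mem hBs hBpos hBinv hm' ha' ha.2.1 haa hα.1 hlammu hrl hrm
      halphaSharp halphaChar hlamSharp hlamChar hmuSharp hmuChar hcomb hx hy hxy.1
  obtain ⟨hs₀, ht₀⟩ := B.pos_of_forall_add_mem hBpos hdec hα.2 hs ht hrel
  refine ⟨hs₀, ht₀, B.exists_isometry_of_forall_add_mem hBs hBpos hdec hs₀ ht₀ ?_⟩
  intro x hx y hy hxy
  obtain ⟨h₁, h₂⟩ := hrel x hx y hy hxy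
  linear_combination s * h₂ - t * h₁

/-- Proposition 2.4 ("skew" root spaces): if `α` is a composite root of the Lie triple system
`m'` lying above exactly two roots `lam, mu` of `m`, and `α^♯ = s·lam^♯ + t·mu^♯` with
`s, t ≠ 0`, then `s, t > 0` and `m'_α` is the graph of `√(t/s)·Φ` for a linear isometry
`Φ` from a subspace of `m_lam` into `m_mu`; in particular
`dim m'_α ≤ min (dim m_lam) (dim m_mu)`. -/
theorem stmt2 {L : Type} [LieRing L] [LieAlgebra ℝ L] [Module.Finite ℝ L]
    (hkill : ∀ X : L, X ≠ 0 → killingForm ℝ L X X < 0)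
    (k m : Submodule ℝ L) (hcompl : IsCompl k m)
    (hkk : ∀ x ∈ k, ∀ y ∈ k, ⁅x, y⁆ ∈ k)
    (hkm : ∀ x ∈ k, ∀ y ∈ m, ⁅x, y⁆ ∈ m)
    (hmm : ∀ x ∈ m, ∀ y ∈ m, ⁅x, y⁆ ∈ k)
    (m' : Submodule ℝ L) (hm' : IsLieTripleSystemIn m m')
    (a' a : Submodule ℝ L)
    (ha' : IsCartanSubalgebraIn m' a') (ha : IsCartanSubalgebraIn m a)
    (haa' : a' = a ⊓ m')
    (α : ↥a' →ₗ[ℝ] ℝ) (hα : α ∈ rootSystemIn m' a')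
    (lam mu : ↥a →ₗ[ℝ] ℝ)
    (hlam : lam ∈ rootSystemIn m a) (hmu : mu ∈ rootSystemIn m a) (hlammu : lam ≠ mu)
    (hrl : restrictForm (haa'.trans_le inf_le_left) lam = α)
    (hrm : restrictForm (haa'.trans_le inf_le_left) mu = α)
    (honly : ∀ nu ∈ rootSystemIn m a,
      restrictForm (haa'.trans_le inf_le_left) nu = α → nu = lam ∨ nu = mu)
    (alphaSharp : L) (halphaSharp : alphaSharp ∈ a')
    (halphaChar : ∀ Z : ↥a', -(killingForm ℝ L (Z : L) alphaSharp) = α Z)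
    (lamSharp : L) (hlamSharp : lamSharp ∈ a)
    (hlamChar : ∀ Z : ↥a, -(killingForm ℝ L (Z : L) lamSharp) = lam Z)
    (muSharp : L) (hmuSharp : muSharp ∈ a)
    (hmuChar : ∀ Z : ↥a, -(killingForm ℝ L (Z : L) muSharp) = mu Z)
    (s t : ℝ) (hs : s ≠ 0) (ht : t ≠ 0)
    (hcomb : alphaSharp = s • lamSharp + t • muSharp) :
    0 < s ∧ 0 < t ∧
    ∃ mlam' : Submodule ℝ L, mlam' ≤ rootSpaceIn m a lam ∧
      ∃ Φ : ↥mlam' →ₗ[ℝ] L,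
        (∀ x : ↥mlam', Φ x ∈ rootSpaceIn m a mu) ∧
        (∀ x y : ↥mlam',
          -(killingForm ℝ L (Φ x) (Φ y)) = -(killingForm ℝ L (x : L) (y : L))) ∧
        (rootSpaceIn m' a' α : Set L) =
          {z | ∃ x : ↥mlam', z = (x : L) + Real.sqrt (t / s) • Φ x} ∧
        Module.finrank ℝ ↥(rootSpaceIn m' a' α) ≤
          min (Module.finrank ℝ ↥(rootSpaceIn m a lam))
              (Module.finrank ℝ ↥(rootSpaceIn m a mu)) :=
  stmt2_general hkill k m hkm hmm m' hm' a' a ha' ha haa' α hα lam mu hlammu hrl hrm honly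
    alphaSharp halphaSharp halphaChar lamSharp hlamSharp hlamChar muSharp hmuSharp hmuChar s t hs ht
    hcomb
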